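/- arXiv:2407.05217 — 4 statements merged into one kernel-verified Lean document; each statement's English description precedes it below -/
import Mathlib

section
/- Let E be a Banach space, W a linear subspace of E, and suppose E \ W is spaceable, i.e., there exists an infinite-dimensional closed subspace F of E with F ∩ W = {0}. Then there exists a sequence (xₙ)ₙ of elements of F with Σₙ ‖xₙ‖ < ∞ that is ℓ∞-independent, such that for every bounded scalar sequence (tₙ)ₙ ∈ ℓ∞ the series Σₙ tₙ xₙ converges in E to a vector of (E \ W) ∪ {0}; in particular E \ W is [(xₙ)ₙ, ℓ∞]-lineable. -/
open Filter Topology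

/-! Since `F` is infinite-dimensional, the common kernel of finitely many functionals always
meets `F` nontrivially; with Hahn–Banach this yields, recursively, unit vectors `eₙ ∈ F` and
functionals `gₙ` with `gₙ eₙ = 1` and `gₘ eₙ = 0` for `m < n`. Take `xₙ = 2⁻ⁿ eₙ`. For bounded
`(tₙ)` the series `∑ tₙ xₙ` converges absolutely, and its sum lies in the closed subspace `F`,
hence outside `W` unless it is `0`. If such a sum vanishes, applying `g₀, g₁, …` in turn shows,
by the triangularity, that every coefficient vanishes. -/

/-- The series `∑ₙ f n` converges to `s`: its partial sums tend to `s`. -/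
def HasSeriesSum {E : Type*} [AddCommMonoid E] [TopologicalSpace E] (f : ℕ → E) (s : E) : Prop :=
  Filter.Tendsto (fun N => ∑ n ∈ Finset.range N, f n) Filter.atTop (nhds s)

section SeriesSum

variable {E : Type*} [AddCommMonoid E] [TopologicalSpace E] {f : ℕ → E} {s : E}

theorem HasSum.hasSeriesSum (h : HasSum f s) : HasSeriesSum f s :=
  h.tendsto_sum_nat

theorem HasSeriesSum.tsum_eq [T2Space E] (h : HasSeriesSum f s) (hf : Summable f) :
    ∑' n, f n = s :=
  tendsto_nhds_unique hf.hasSum.hasSeriesSum h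

end SeriesSum

theorem Submodule.exists_mem_ne_zero_forall_eq_zero_of_not_finite {K M ι : Type*} [Field K]
    [AddCommGroup M] [Module K M] [Finite ι] {F : Submodule K M} (hF : ¬ Module.Finite K F)
    (f : ι → M →ₗ[K] K) : ∃ y ∈ F, y ≠ 0 ∧ ∀ i, f i y = 0 := by
  let φ : F →ₗ[K] ι → K := LinearMap.pi fun i => (f i).comp F.subtype
  have hker : LinearMap.ker φ ≠ ⊥ := fun h =>
    hF (Module.Finite.of_injective φ (LinearMap.ker_eq_bot.mp h))
  obtain ⟨y, hy, hy0⟩ := Submodule.exists_mem_ne_zero_of_ne_bot hker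
  exact ⟨y, y.2, by simpa using hy0, fun i => congr_fun (LinearMap.mem_ker.mp hy) i⟩

theorem eq_zero_of_tsum_smul_eq_zero_of_triangular {𝕜 E : Type*} [Field 𝕜] [TopologicalSpace 𝕜]
    [T2Space 𝕜] [AddCommGroup E] [TopologicalSpace E] [Module 𝕜 E] {v : ℕ → E}
    {g : ℕ → E →L[𝕜] 𝕜} (hdiag : ∀ n, g n (v n) ≠ 0) (hlow : ∀ m n, m < n → g m (v n) = 0)
    {c : ℕ → 𝕜} (hc : Summable fun n => c n • v n) (h0 : ∑' n, c n • v n = 0) : c = 0 := by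
  funext n
  induction n using Nat.strong_induction_on with
  | _ n ih =>
    have hgn : g n (∑' k, c k • v k) = c n * g n (v n) := by
      rw [(g n).map_tsum hc, tsum_eq_single n fun k hk => ?_]
      · simp
      · rcases hk.lt_or_gt with hkn | hnk
        · simp [ih k hkn]
        · simp [hlow n k hnk]
    rw [h0, map_zero] at hgn
    exact (mul_eq_zero.mp hgn.symm).resolve_right (hdiag n)

theorem summable_smul_of_norm_le {ι 𝕜 E : Type*} [NormedField 𝕜] [NormedAddCommGroup E]
    [NormedSpace 𝕜 E] [CompleteSpace E] {x : ι → E} (hx : Summable fun i => ‖x i‖) {t : ι → 𝕜}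
    {C : ℝ} (ht : ∀ i, ‖t i‖ ≤ C) : Summable fun i => t i • x i :=
  .of_norm_bounded (hx.mul_left C) fun i =>
    (norm_smul_le _ _).trans (mul_le_mul_of_nonneg_right (ht i) (norm_nonneg _))

section Triangular

variable {𝕜 E : Type*} [RCLike 𝕜] [NormedAddCommGroup E] [NormedSpace 𝕜 E] {F : Submodule 𝕜 E}

theorem exists_norm_eq_one_mem_forall_eq_zero_of_not_finite (hF : ¬ Module.Finite 𝕜 F)
    (l : List (StrongDual 𝕜 E)) :
    ∃ e ∈ F, ‖e‖ = 1 ∧ (∀ h ∈ l, h e = 0) ∧ ∃ g : StrongDual 𝕜 E, g e = 1 := by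
  obtain ⟨y, hyF, hy0, hy⟩ := Submodule.exists_mem_ne_zero_forall_eq_zero_of_not_finite hF
    fun i : Fin l.length => (l.get i : E →ₗ[𝕜] 𝕜)
  have hy_norm : ‖y‖ ≠ 0 := norm_ne_zero_iff.mpr hy0
  let e : E := (‖y‖ : 𝕜)⁻¹ • y
  have he_norm : ‖e‖ = 1 := by
    rw [norm_smul, norm_inv, RCLike.norm_ofReal, abs_norm, inv_mul_cancel₀ hy_norm]
  obtain ⟨g, -, hg⟩ := exists_dual_vector 𝕜 e (by rw [he_norm]; exact one_ne_zero)
  refine ⟨e, F.smul_mem _ hyF, he_norm, fun h hl => ?_, g, by simp [hg, he_norm]⟩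
  obtain ⟨i, rfl⟩ := List.get_of_mem hl
  rw [map_smul, show l.get i y = 0 from hy i, smul_zero]

theorem exists_triangular_seq_of_not_finite (hF : ¬ Module.Finite 𝕜 F) :
    ∃ (e : ℕ → E) (g : ℕ → StrongDual 𝕜 E), (∀ n, e n ∈ F) ∧ (∀ n, ‖e n‖ = 1) ∧
      (∀ n, g n (e n) = 1) ∧ ∀ m n, m < n → g m (e n) = 0 := by
  choose e heF he_norm he_ker g hg using exists_norm_eq_one_mem_forall_eq_zero_of_not_finite hF
  let L : ℕ → List (StrongDual 𝕜 E) := fun n => Nat.rec [] (fun _ l => g l :: l) n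
  have hL : ∀ m n, m < n → g (L m) ∈ L n := by
    intro m n hmn
    induction n with
    | zero => omega
    | succ n ih =>
      rcases Nat.lt_succ_iff_lt_or_eq.mp hmn with hmn | rfl
      · exact List.mem_cons_of_mem _ (ih hmn)
      · exact List.mem_cons_self
  exact ⟨fun n => e (L n), fun n => g (L n), fun n => heF _, fun n => he_norm _, fun n => hg _,
    fun m n hmn => he_ker _ _ (hL m n hmn)⟩

end Triangular

/-- Let `E` be a Banach space, `W` a linear subspace, and suppose `E \ W` is spaceable,
witnessed by an infinite-dimensional closed subspace `F` with `F ∩ W = {0}`. Then there is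
a sequence `(xₙ)ₙ` of elements of `F` with `∑ₙ ‖xₙ‖ < ∞` which is `ℓ∞`-independent, and such
that for every bounded scalar sequence `(tₙ)ₙ` the series `∑ₙ tₙ xₙ` converges in `E` to a
vector of `(E \ W) ∪ {0}`; in particular `E \ W` is `[(xₙ)ₙ, ℓ∞]`-lineable. -/
theorem complement_ellInfty_lineable_of_spaceable
    {𝕜 : Type*} [RCLike 𝕜] {E : Type*} [NormedAddCommGroup E] [NormedSpace 𝕜 E]
    [CompleteSpace E] (W : Submodule 𝕜 E) (F : Submodule 𝕜 E)
    (hFclosed : IsClosed (F : Set E)) (hFdim : ¬ Module.Finite 𝕜 F)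
    (hFW : F ⊓ W = ⊥) :
    ∃ x : ℕ → E, (∀ n, x n ∈ F) ∧ Summable (fun n => ‖x n‖) ∧
      (∀ c : ℕ → 𝕜, (∃ C : ℝ, ∀ n, ‖c n‖ ≤ C) →
        HasSeriesSum (fun n => c n • x n) (0 : E) → c = 0) ∧
      (∀ t : ℕ → 𝕜, (∃ C : ℝ, ∀ n, ‖t n‖ ≤ C) →
        ∃ s : E, HasSeriesSum (fun n => t n • x n) s ∧ s ∈ ((W : Set E)ᶜ ∪ {0})) := by
  obtain ⟨e, g, heF, he_norm, hg_diag, hg_low⟩ := exists_triangular_seq_of_not_finite hFdim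
  let x : ℕ → E := fun n => ((2 : 𝕜) ^ n)⁻¹ • e n
  have hxF : ∀ n, x n ∈ F := fun n => F.smul_mem _ (heF n)
  have hx_summable : Summable fun n => ‖x n‖ := by
    simpa [x, norm_smul, he_norm] using summable_geometric_two
  refine ⟨x, hxF, hx_summable, fun c ⟨C, hC⟩ h0 => ?_, fun t ⟨C, hC⟩ => ?_⟩
  · have hc := summable_smul_of_norm_le hx_summable hC
    exact eq_zero_of_tsum_smul_eq_zero_of_triangular (g := g) (fun n => by simp [x, hg_diag])
      (fun m n hmn => by simp [x, hg_low m n hmn]) hc (h0.tsum_eq hc)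
  · have ht := summable_smul_of_norm_le hx_summable hC
    refine ⟨_, ht.hasSum.hasSeriesSum, ?_⟩
    have hsF : ∑' n, t n • x n ∈ F := tsum_mem hFclosed fun n => F.smul_mem _ (hxF n)
    by_cases hsW : ∑' n, t n • x n ∈ W
    · exact Or.inr (Submodule.disjoint_def.mp (disjoint_iff.mpr hFW) _ hsF hsW)
    · exact Or.inl hsW
end

section
/- Let E be a Banach space and F an infinite-dimensional closed linear subspace of E. Then the following conditions are equivalent: (1) E \ F is [(xₙ)ₙ, 𝒮]-lineable for some closed linear subspace 𝒮 of ℓ∞ containing c₀ and some 𝒮-independent sequence (xₙ)ₙ of elements of E; (2) E \ F is spaceable; (3) F has infinite codimension in E, i.e., dim(E/F) = ∞. -/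
open Filter Topology

/-- A set `A` is spaceable if `A ∪ {0}` contains a closed infinite-dimensional subspace. -/
def Spaceable (𝕜 : Type*) {E : Type*} [Semiring 𝕜] [AddCommMonoid E] [Module 𝕜 E]
    [TopologicalSpace E] (A : Set E) : Prop :=
  ∃ F : Submodule 𝕜 E, IsClosed (F : Set E) ∧ ¬ Module.Finite 𝕜 F ∧ (F : Set E) ⊆ A ∪ {0}

/-- The Banach space `ℓ∞` of bounded scalar sequences. -/
noncomputable abbrev ellInfty (𝕜 : Type*) [RCLike 𝕜] := lp (fun _ : ℕ => 𝕜) ⊤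

/-- `(xₙ)ₙ` is `𝒮`-independent: whenever `(cₙ)ₙ ∈ 𝒮` and `∑ₙ cₙ xₙ = 0`, all `cₙ = 0`. -/
def SIndep (𝕜 : Type*) [RCLike 𝕜] {E : Type*} [AddCommMonoid E] [Module 𝕜 E]
    [TopologicalSpace E] (S : Submodule 𝕜 (ellInfty 𝕜)) (x : ℕ → E) : Prop :=
  ∀ c ∈ S, HasSeriesSum (fun n => (c : ∀ _ : ℕ, 𝕜) n • x n) (0 : E) → c = 0

/-- `A` is `[(xₙ)ₙ, 𝒮]`-lineable: for each `(cₙ)ₙ ∈ 𝒮` the series `∑ₙ cₙ xₙ` converges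
to a vector of `A ∪ {0}`. -/
def SeqSLineable (𝕜 : Type*) [RCLike 𝕜] {E : Type*} [AddCommMonoid E] [Module 𝕜 E]
    [TopologicalSpace E] (x : ℕ → E) (S : Submodule 𝕜 (ellInfty 𝕜)) (A : Set E) : Prop :=
  ∀ c ∈ S, ∃ s : E, HasSeriesSum (fun n => (c : ∀ _ : ℕ, 𝕜) n • x n) s ∧ s ∈ A ∪ {0}

/-- A closed subspace `𝒮` of `ℓ∞` containing `c₀`. -/
def IsClosedSupsetC0 (𝕜 : Type*) [RCLike 𝕜] (S : Submodule 𝕜 (ellInfty 𝕜)) : Prop :=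
  IsClosed (S : Set (ellInfty 𝕜)) ∧
    ∀ f : ellInfty 𝕜, Filter.Tendsto (fun n => (f : ∀ _ : ℕ, 𝕜) n) Filter.atTop (nhds 0) → f ∈ S

/-
If `E ⧸ F` is finite-dimensional, both (1) and (2) fail for linear-algebra reasons: a subspace
meeting `F` only in `0` injects into `E ⧸ F`, and among the images of `x₀, …, x_d` in `E ⧸ F` there
is a linear relation, whose coefficients form a finitely supported `c ∈ c₀ ⊆ 𝒮` with `∑ cₙ xₙ ∈ F`.

If `E ⧸ F` is infinite-dimensional, Mazur's construction of basic sequences can be run in `E` and in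
`E ⧸ F` at once: the next term is taken in the common kernel of finitely many functionals norming
the spans built so far, in `E` and in `E ⧸ F`, and outside `F`. This gives `(xₙ)` basic in `E` with
`(q xₙ)` normalized basic in `E ⧸ F`, so `q (∑ cₙ xₙ) = 0` forces `c = 0`. Rescaling the `xₙ` to be
absolutely summable yields (1) with `𝒮 = ℓ∞`. For (2), take the closed span `G` of the `xₙ`: since
the basis projections of `(xₙ)` are uniformly bounded and the coefficient functionals factor
through `q`, an element of `G ∩ F` is a limit of vectors whose heads tend to `0`, hence is `0`.
-/

open Finset Submodule

theorem hasSeriesSum_sum_of_support_subset {X : Type*} [AddCommMonoid X] [TopologicalSpace X]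
    {f : ℕ → X} {s : Finset ℕ} (hf : ∀ n ∉ s, f n = 0) : HasSeriesSum f (∑ n ∈ s, f n) :=
  (hasSum_sum_of_ne_finset_zero hf).tendsto_sum_nat

section BasicSequence

variable {𝕜 X Y : Type*} [NormedField 𝕜]

theorem HasSeriesSum.map [AddCommMonoid X] [TopologicalSpace X] [Module 𝕜 X]
    [AddCommMonoid Y] [TopologicalSpace Y] [Module 𝕜 Y] {f : ℕ → X} {s : X}
    (h : HasSeriesSum f s) (T : X →L[𝕜] Y) : HasSeriesSum (fun n => T (f n)) (T s) := by
  simpa [HasSeriesSum, map_sum, Function.comp_def] using (T.continuous.tendsto s).comp h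

theorem exists_sum_range_eq_of_mem_span [AddCommMonoid X] [Module 𝕜 X] {x : ℕ → X} {s : X}
    (hs : s ∈ span 𝕜 (Set.range x)) :
    ∃ (a : ℕ → 𝕜) (N : ℕ), ∀ n, N ≤ n → ∑ i ∈ range n, a i • x i = s := by
  obtain ⟨c, rfl⟩ := Finsupp.mem_span_range_iff_exists_finsupp.1 hs
  obtain ⟨N, hN⟩ := c.support.exists_nat_subset_range
  exact ⟨c, N, fun n hn => (Finsupp.sum_of_support_subset c (hN.trans (range_subset_range.2 hn))
    (fun i a => a • x i) fun i _ => zero_smul 𝕜 (x i)).symm⟩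

variable [SeminormedAddCommGroup X] [NormedSpace 𝕜 X]

variable (𝕜) in
/-- Grunblum's criterion with constant `C`; for nonzero terms it says that `x` is a basic
sequence whose basis projections have norm at most `C`. -/
def IsBasicSeq (C : ℝ) (x : ℕ → X) : Prop :=
  ∀ (a : ℕ → 𝕜) {m n : ℕ}, m ≤ n → ‖∑ i ∈ range m, a i • x i‖ ≤ C * ‖∑ i ∈ range n, a i • x i‖

namespace IsBasicSeq

variable {C : ℝ} {x : ℕ → X}

theorem smul (hx : IsBasicSeq 𝕜 C x) (r : ℕ → 𝕜) : IsBasicSeq 𝕜 C (fun n => r n • x n) := by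
  intro a m n hmn
  simpa only [smul_smul] using hx (fun i => a i * r i) hmn

theorem norm_mul_norm_le (hx : IsBasicSeq 𝕜 C x) (a : ℕ → 𝕜) {m n : ℕ} (hmn : m < n) :
    ‖a m‖ * ‖x m‖ ≤ 2 * C * ‖∑ i ∈ range n, a i • x i‖ := by
  have hm : a m • x m = ∑ i ∈ range (m + 1), a i • x i - ∑ i ∈ range m, a i • x i := by
    rw [sum_range_succ]; abel
  rw [← norm_smul, hm]
  linarith [norm_sub_le (∑ i ∈ range (m + 1), a i • x i) (∑ i ∈ range m, a i • x i),
    hx a (Nat.succ_le_of_lt hmn), hx a hmn.le]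

theorem of_mul_norm_le_norm_add {δ : ℕ → ℝ} (hC : 0 < C) (hδ0 : ∀ n, 0 ≤ δ n)
    (hδ : ∀ m n, C⁻¹ ≤ ∏ j ∈ Ico m n, δ j)
    (hx : ∀ n, ∀ v ∈ span 𝕜 (x '' Set.Iio n), ∀ t : 𝕜, δ n * ‖v‖ ≤ ‖v + t • x n‖) :
    IsBasicSeq 𝕜 C x := by
  intro a m n hmn
  have key : (∏ j ∈ Ico m n, δ j) * ‖∑ i ∈ range m, a i • x i‖ ≤ ‖∑ i ∈ range n, a i • x i‖ := by
    induction n, hmn using Nat.le_induction with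
    | base => simp
    | succ k hk ih =>
      have hmem : ∑ i ∈ range k, a i • x i ∈ span 𝕜 (x '' Set.Iio k) :=
        sum_mem fun i hi => smul_mem _ _ (subset_span ⟨i, mem_range.1 hi, rfl⟩)
      rw [prod_Ico_succ_top hk, sum_range_succ, mul_comm _ (δ k), mul_assoc]
      exact (mul_le_mul_of_nonneg_left ih (hδ0 k)).trans (hx k _ hmem (a k))
  calc ‖∑ i ∈ range m, a i • x i‖ = C * (C⁻¹ * ‖∑ i ∈ range m, a i • x i‖) := by
        rw [← mul_assoc, mul_inv_cancel₀ hC.ne', one_mul]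
    _ ≤ C * ‖∑ i ∈ range n, a i • x i‖ := mul_le_mul_of_nonneg_left
        ((mul_le_mul_of_nonneg_right (hδ m n) (norm_nonneg _)).trans key) hC.le

end IsBasicSeq

end BasicSequence

namespace IsBasicSeq

variable {𝕜 X Y : Type*} [NormedField 𝕜] [NormedAddCommGroup X] [NormedSpace 𝕜 X]
  [NormedAddCommGroup Y] [NormedSpace 𝕜 Y] {C : ℝ} {x : ℕ → X}

theorem eq_zero_of_hasSeriesSum_zero (hx : IsBasicSeq 𝕜 C x) (hx0 : ∀ n, x n ≠ 0)
    {a : ℕ → 𝕜} (ha : HasSeriesSum (fun n => a n • x n) 0) : a = 0 := by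
  funext m
  have hlim : Tendsto (fun n => 2 * C * ‖∑ i ∈ range n, a i • x i‖) atTop (𝓝 0) := by
    simpa using ha.norm.const_mul (2 * C)
  have hle : ‖a m‖ * ‖x m‖ ≤ 0 :=
    ge_of_tendsto hlim ((eventually_gt_atTop m).mono fun n hn => hx.norm_mul_norm_le a hn)
  simpa [hx0 m] using le_antisymm hle (by positivity)

theorem linearIndependent (hx : IsBasicSeq 𝕜 C x) (hx0 : ∀ n, x n ≠ 0) :
    LinearIndependent 𝕜 x := by
  classical
  rw [linearIndependent_iff']
  intro s g hg i hi
  have hsum : HasSeriesSum (fun n => (if n ∈ s then g n else 0) • x n) 0 := by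
    have hg' : ∑ n ∈ s, (if n ∈ s then g n else 0) • x n = 0 := by
      rw [← hg]; exact sum_congr rfl fun n hn => by simp [hn]
    exact hg' ▸ hasSeriesSum_sum_of_support_subset fun n hn => by simp [hn]
  simpa [hi] using congrFun (hx.eq_zero_of_hasSeriesSum_zero hx0 hsum) i

theorem norm_le_mul_norm_sub_of_mem_span (hx : IsBasicSeq 𝕜 C x) {C' : ℝ} (T : X →L[𝕜] Y)
    (hTx : IsBasicSeq 𝕜 C' (fun n => T (x n))) (hTx0 : ∀ n, T (x n) ≠ 0) {y : X}
    (hy : y ∈ closure (span 𝕜 (Set.range x) : Set X)) (hTy : T y = 0) {s : X}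
    (hs : s ∈ span 𝕜 (Set.range x)) : ‖s‖ ≤ C * ‖y - s‖ := by
  obtain ⟨a, M, ha⟩ := exists_sum_range_eq_of_mem_span hs
  obtain ⟨u, hu, hlim⟩ := mem_closure_iff_seq_limit.1 hy
  choose b N hb using fun k => exists_sum_range_eq_of_mem_span (hu k)
  -- the coefficients of `u k` are controlled by `T (u k)`, which tends to `T y = 0`
  have hcoeff : ∀ i, Tendsto (fun k => b k i) atTop (𝓝 0) := by
    intro i
    have hTu : Tendsto (fun k => 2 * C' * ‖T (u k)‖ / ‖T (x i)‖) atTop (𝓝 0) := by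
      simpa [hTy] using (((T.continuous.tendsto y).comp hlim).norm.const_mul (2 * C')).div_const
        ‖T (x i)‖
    refine squeeze_zero_norm (fun k => ?_) hTu
    have hbound := hTx.norm_mul_norm_le (b k) (lt_max_of_lt_right (Nat.lt_succ_self i) :
      i < max (N k) (i + 1))
    simp only [← map_smul, ← map_sum, hb k _ (le_max_left _ _)] at hbound
    rwa [le_div_iff₀ (norm_pos_iff.2 (hTx0 i))]
  have hhead : Tendsto (fun k => ∑ i ∈ range M, b k i • x i) atTop (𝓝 0) := by
    simpa using tendsto_finsetSum (range M) fun i _ => (hcoeff i).smul_const (x i)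
  have hle : ∀ k, ‖s‖ ≤ ‖∑ i ∈ range M, b k i • x i‖ + C * ‖u k - s‖ := by
    intro k
    have hproj := hx (fun i => b k i - a i) (le_max_left M (N k))
    simp only [sub_smul, sum_sub_distrib, hb k _ (le_max_right _ _), ha _ (le_max_left _ _),
      ha M le_rfl] at hproj
    linarith [norm_le_norm_add_norm_sub' s (∑ i ∈ range M, b k i • x i),
      norm_sub_rev s (∑ i ∈ range M, b k i • x i)]
  have hrhs : Tendsto (fun k => ‖∑ i ∈ range M, b k i • x i‖ + C * ‖u k - s‖) atTop
      (𝓝 (C * ‖y - s‖)) := by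
    simpa using hhead.norm.add (((hlim.sub_const s).norm).const_mul C)
  exact ge_of_tendsto' hrhs hle

theorem eq_zero_of_mem_closure (hx : IsBasicSeq 𝕜 C x) {C' : ℝ} (T : X →L[𝕜] Y)
    (hTx : IsBasicSeq 𝕜 C' (fun n => T (x n))) (hTx0 : ∀ n, T (x n) ≠ 0) {y : X}
    (hy : y ∈ closure (span 𝕜 (Set.range x) : Set X)) (hTy : T y = 0) : y = 0 := by
  refine norm_le_zero_iff.1 (ge_of_tendsto (x := 𝓝[>] 0)
    (((continuous_const_mul (1 + |C|)).tendsto' 0 0 (mul_zero _)).mono_left nhdsWithin_le_nhds) ?_)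
  filter_upwards [self_mem_nhdsWithin] with ε (hε : 0 < ε)
  obtain ⟨s, hs, hys⟩ := Metric.mem_closure_iff.1 hy ε hε
  rw [dist_eq_norm] at hys
  have := hx.norm_le_mul_norm_sub_of_mem_span T hTx hTx0 hy hTy hs
  nlinarith [norm_le_norm_add_norm_sub' y s, norm_sub_rev y s, le_abs_self C, abs_nonneg C,
    norm_nonneg (y - s)]

end IsBasicSeq

theorem exists_prod_Ico_ge_half :
    ∃ δ : ℕ → ℝ, (∀ n, 0 ≤ δ n ∧ δ n < 1) ∧ ∀ m n, 2⁻¹ ≤ ∏ j ∈ Ico m n, δ j := by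
  have hlog : 0 < Real.log 2 := Real.log_pos one_lt_two
  refine ⟨fun j => Real.exp (-(Real.log 2 * (1 / 2) ^ (j + 1))),
    fun j => ⟨(Real.exp_pos _).le, Real.exp_lt_one_iff.2 (by simp only [neg_lt_zero]; positivity)⟩,
    fun m n => ?_⟩
  have hsum : ∑ j ∈ Ico m n, (1 / 2 : ℝ) ^ (j + 1) ≤ 1 :=
    calc ∑ j ∈ Ico m n, (1 / 2 : ℝ) ^ (j + 1) ≤ ∑ j ∈ range n, (1 / 2 : ℝ) ^ (j + 1) :=
          sum_le_sum_of_subset_of_nonneg (fun j hj => mem_range.2 (mem_Ico.1 hj).2)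
            fun _ _ _ => by positivity
      _ = 1 / 2 * ∑ j ∈ range n, (1 / 2 : ℝ) ^ j := by simp only [mul_sum, pow_succ, mul_comm]
      _ ≤ 1 := by linarith [sum_geometric_two_le n]
  rw [← Real.exp_sum, ← Real.exp_log (by norm_num : (0 : ℝ) < 2⁻¹), Real.exp_le_exp,
    Real.log_inv, sum_neg_distrib, ← mul_sum]
  nlinarith

theorem Submodule.exists_mem_ker_notMem_of_not_finite_quotient {K E V : Type*} [DivisionRing K]
    [AddCommGroup E] [Module K E] [AddCommGroup V] [Module K V] [Module.Finite K V]
    (F : Submodule K E) (hF : ¬ Module.Finite K (E ⧸ F)) (L : E →ₗ[K] V) :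
    ∃ x ∈ LinearMap.ker L, x ∉ F := by
  by_contra! h
  have : Module.Finite K (E ⧸ LinearMap.ker L) := Module.Finite.equiv L.quotKerEquivRange.symm
  exact hF (Module.Finite.of_surjective _ (factor_surjective h))

theorem exists_seq_forall_image_Iio {α : Type*} (P : ℕ → Set α → α → Prop)
    (h : ∀ n s, s.Finite → ∃ a, P n s a) : ∃ x : ℕ → α, ∀ n, P n (x '' Set.Iio n) (x n) := by
  choose g hg using fun n (l : List α) => h n {a | a ∈ l} l.finite_toSet
  let L : ℕ → List α := fun n => Nat.rec [] (fun k l => l ++ [g k l]) n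
  have hL : ∀ n, L n = (List.range n).map fun k => g k (L k) := by
    intro n
    induction n with
    | zero => rfl
    | succ n ih => rw [List.range_succ, List.map_append, ← ih]; rfl
  refine ⟨fun n => g n (L n), fun n => ?_⟩
  convert hg n (L n) using 2
  ext a
  simp [hL n, eq_comm]

theorem not_finite_quotient_of_spaceable_compl {K E : Type*} [Field K] [AddCommGroup E]
    [Module K E] [TopologicalSpace E] {F : Submodule K E} (h : Spaceable K (F : Set E)ᶜ) :
    ¬ Module.Finite K (E ⧸ F) := by
  obtain ⟨G, -, hG, hGF⟩ := h
  intro hfin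
  refine hG (Module.Finite.of_injective (F.mkQ ∘ₗ G.subtype) (LinearMap.ker_eq_bot.1 ?_))
  refine LinearMap.ker_eq_bot'.2 fun g hg => Subtype.ext ((hGF g.2).resolve_left ?_)
  simpa using hg

theorem not_finite_quotient_of_seqSLineable {𝕜 E : Type*} [RCLike 𝕜] [AddCommGroup E]
    [Module 𝕜 E] [TopologicalSpace E] [T2Space E] {F : Submodule 𝕜 E}
    {S : Submodule 𝕜 (ellInfty 𝕜)} (hS : IsClosedSupsetC0 𝕜 S) {x : ℕ → E}
    (hind : SIndep 𝕜 S x) (hlin : SeqSLineable 𝕜 x S (F : Set E)ᶜ) :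
    ¬ Module.Finite 𝕜 (E ⧸ F) := by
  classical
  intro hfin
  obtain ⟨s, g, hg, i, hi, hgi⟩ := not_linearIndependent_iff.1
    (Module.Finite.not_linearIndependent_of_infinite (R := 𝕜) fun n => F.mkQ (x n))
  have hsupp : ∀ n ∉ s, (if n ∈ s then g n else 0) = 0 := fun n hn => if_neg hn
  let c : ellInfty 𝕜 := ⟨fun n => if n ∈ s then g n else 0,
    (memℓp_zero (s.finite_toSet.subset fun n hn => not_not.1 (mt (hsupp n) hn))).of_exponent_ge
      le_top⟩
  have hcS : c ∈ S := hS.2 c <| tendsto_nhds_of_eventually_eq <|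
    (Nat.cofinite_eq_atTop ▸ s.eventually_cofinite_notMem).mono hsupp
  have hsum : HasSeriesSum (fun n => (c : ℕ → 𝕜) n • x n) (∑ n ∈ s, g n • x n) := by
    have hc : ∑ n ∈ s, (c : ℕ → 𝕜) n • x n = ∑ n ∈ s, g n • x n :=
      sum_congr rfl fun n hn => by simp [c, hn]
    exact hc ▸ hasSeriesSum_sum_of_support_subset fun n hn => by simp [c, hn]
  have hF : ∑ n ∈ s, g n • x n ∈ F := by
    have : F.mkQ (∑ n ∈ s, g n • x n) = 0 := by simpa [map_sum] using hg
    exact (Submodule.Quotient.mk_eq_zero F).1 this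
  obtain ⟨u, hu, hmem⟩ := hlin c hcS
  obtain rfl := tendsto_nhds_unique hu hsum
  have hc0 := hind c hcS (hmem.resolve_left (not_not.2 hF) ▸ hsum)
  exact hgi (by simpa [c, hi] using congrArg (fun c : ellInfty 𝕜 => (c : ℕ → 𝕜) i) hc0)

section Banach

variable {𝕜 E : Type*} [RCLike 𝕜] [NormedAddCommGroup E] [NormedSpace 𝕜 E]

theorem exists_finset_strongDual_mul_norm_le_norm_add (V : Submodule 𝕜 E) [FiniteDimensional 𝕜 V]
    {δ : ℝ} (hδ : δ < 1) :
    ∃ Φ : Finset (StrongDual 𝕜 E), ∀ v ∈ V, ∀ y : E, (∀ f ∈ Φ, f y = 0) → δ * ‖v‖ ≤ ‖v + y‖ := by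
  choose g hg1 hg using fun u : E => exists_dual_vector'' 𝕜 u
  have hK : IsCompact (((↑) : V → E) '' Metric.sphere 0 1) :=
    (isCompact_sphere 0 1).image continuous_subtype_val
  -- a functional norming a unit vector still nearly norms the vectors around it
  obtain ⟨t, ht⟩ := hK.elim_finite_subcover (fun u => {w | δ * ‖w‖ < ‖g u w‖})
    (fun u => isOpen_lt (continuous_const.mul continuous_norm) (g u).continuous.norm)
    fun w ⟨w', hw', hw⟩ => Set.mem_iUnion.2 ⟨w, by
      have h1 : ‖(w' : E)‖ = 1 := mem_sphere_zero_iff_norm.1 hw'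
      show δ * ‖w‖ < ‖g w w‖
      rw [hg, RCLike.norm_ofReal, abs_norm, ← hw, h1]
      linarith⟩
  classical
  refine ⟨t.image g, fun v hv y hy => ?_⟩
  rcases eq_or_ne v 0 with rfl | hv0
  · simp
  have hvpos : 0 < ‖v‖ := norm_pos_iff.2 hv0
  obtain ⟨u, hut, hu⟩ : ∃ u ∈ t, δ * ‖(‖v‖⁻¹ : 𝕜) • v‖ < ‖g u ((‖v‖⁻¹ : 𝕜) • v)‖ := by
    simpa using ht ⟨⟨(‖v‖⁻¹ : 𝕜) • v, V.smul_mem _ hv⟩, by simp [norm_smul, hvpos.ne'], rfl⟩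
  rw [map_smul, norm_smul, norm_smul, mul_left_comm] at hu
  calc δ * ‖v‖ ≤ ‖g u v‖ := (lt_of_mul_lt_mul_left hu (norm_nonneg _)).le
    _ = ‖g u (v + y)‖ := by rw [map_add, hy _ (mem_image_of_mem g hut), add_zero]
    _ ≤ ‖g u‖ * ‖v + y‖ := (g u).le_opNorm _
    _ ≤ ‖v + y‖ := mul_le_of_le_one_left (norm_nonneg _) (hg1 u)

variable (F : Submodule 𝕜 E)

theorem exists_norm_mkQ_eq_one_mul_norm_le_norm_add [IsClosed (F : Set E)]
    (hF : ¬ Module.Finite 𝕜 (E ⧸ F)) {A : Set E} (hA : A.Finite) {δ : ℝ} (hδ : δ < 1) :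
    ∃ x : E, ‖F.mkQ x‖ = 1 ∧ (∀ v ∈ span 𝕜 A, ∀ t : 𝕜, δ * ‖v‖ ≤ ‖v + t • x‖) ∧
      ∀ w ∈ span 𝕜 (F.mkQ '' A), ∀ t : 𝕜, δ * ‖w‖ ≤ ‖w + t • F.mkQ x‖ := by
  have := FiniteDimensional.span_of_finite 𝕜 hA
  have := FiniteDimensional.span_of_finite 𝕜 (hA.image F.mkQ)
  obtain ⟨Φ, hΦ⟩ := exists_finset_strongDual_mul_norm_le_norm_add (span 𝕜 A) hδ
  obtain ⟨Ψ, hΨ⟩ := exists_finset_strongDual_mul_norm_le_norm_add (span 𝕜 (F.mkQ '' A)) hδ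
  obtain ⟨x₀, hx₀, hx₀F⟩ := F.exists_mem_ker_notMem_of_not_finite_quotient hF
    ((LinearMap.pi fun f : Φ => (f : StrongDual 𝕜 E).toLinearMap).prod
      (LinearMap.pi fun g : Ψ => (g : StrongDual 𝕜 (E ⧸ F)).toLinearMap ∘ₗ F.mkQ))
  have hΦx₀ : ∀ f ∈ Φ, f x₀ = 0 := fun f hf => congrFun (congrArg Prod.fst hx₀) ⟨f, hf⟩
  have hΨx₀ : ∀ g ∈ Ψ, g (F.mkQ x₀) = 0 := fun g hg => congrFun (congrArg Prod.snd hx₀) ⟨g, hg⟩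
  have hq : 0 < ‖F.mkQ x₀‖ := norm_pos_iff.2 (by simpa using hx₀F)
  refine ⟨(‖F.mkQ x₀‖⁻¹ : 𝕜) • x₀, ?_,
    fun v hv t => hΦ v hv _ fun f hf => by simp only [map_smul, hΦx₀ f hf, smul_zero],
    fun w hw t => hΨ w hw _ fun g hg => by simp only [map_smul, hΨx₀ g hg, smul_zero]⟩
  rw [map_smul, norm_smul, norm_inv, RCLike.norm_ofReal, abs_norm, inv_mul_cancel₀ hq.ne']

theorem exists_isBasicSeq_isBasicSeq_mkQ [IsClosed (F : Set E)] (hF : ¬ Module.Finite 𝕜 (E ⧸ F)) :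
    ∃ x : ℕ → E, (∀ n, ‖F.mkQ (x n)‖ = 1) ∧ IsBasicSeq 𝕜 2 x ∧
      IsBasicSeq 𝕜 2 (fun n => F.mkQ (x n)) := by
  obtain ⟨δ, hδ1, hδ⟩ := exists_prod_Ico_ge_half
  obtain ⟨x, hx⟩ := exists_seq_forall_image_Iio (fun n A x => ‖F.mkQ x‖ = 1 ∧
      (∀ v ∈ span 𝕜 A, ∀ t : 𝕜, δ n * ‖v‖ ≤ ‖v + t • x‖) ∧
      ∀ w ∈ span 𝕜 (F.mkQ '' A), ∀ t : 𝕜, δ n * ‖w‖ ≤ ‖w + t • F.mkQ x‖)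
    fun n A hA => exists_norm_mkQ_eq_one_mul_norm_le_norm_add F hF hA (hδ1 n).2
  refine ⟨x, fun n => (hx n).1,
    .of_mul_norm_le_norm_add two_pos (fun n => (hδ1 n).1) hδ fun n => (hx n).2.1,
    .of_mul_norm_le_norm_add two_pos (fun n => (hδ1 n).1) hδ fun n => ?_⟩
  simpa only [Set.image_image] using (hx n).2.2

theorem exists_seqSLineable_of_not_finite_quotient [CompleteSpace E] [IsClosed (F : Set E)]
    (hF : ¬ Module.Finite 𝕜 (E ⧸ F)) :
    ∃ S : Submodule 𝕜 (ellInfty 𝕜), IsClosedSupsetC0 𝕜 S ∧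
      ∃ x : ℕ → E, SIndep 𝕜 S x ∧ SeqSLineable 𝕜 x S (F : Set E)ᶜ := by
  obtain ⟨x, hx1, -, hqx⟩ := exists_isBasicSeq_isBasicSeq_mkQ F hF
  -- rescale so that `∑ cₙ yₙ` converges absolutely for every bounded `c`
  let r : ℕ → 𝕜 := fun n => ((2 ^ n * (‖x n‖ + 1))⁻¹ : ℝ)
  let y : ℕ → E := fun n => r n • x n
  have hr0 : ∀ n, r n ≠ 0 := fun n => RCLike.ofReal_ne_zero.2 (by positivity)
  have hy : ∀ n, ‖y n‖ ≤ (1 / 2) ^ n := fun n => by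
    have hpos : 0 < 2 ^ n * (‖x n‖ + 1) := by positivity
    have h2 : (2 : ℝ) ^ n * (1 / 2) ^ n = 1 := by rw [← mul_pow]; norm_num
    rw [norm_smul, RCLike.norm_ofReal, abs_of_pos (inv_pos.2 hpos), inv_mul_le_iff₀ hpos]
    nlinarith [norm_nonneg (x n)]
  have hqy : IsBasicSeq 𝕜 2 (fun n => F.mkQ (y n)) := by
    simpa only [y, map_smul] using hqx.smul r
  have hqy0 : ∀ n, F.mkQ (y n) ≠ 0 := fun n => by
    rw [map_smul]
    exact smul_ne_zero (hr0 n) (norm_ne_zero_iff.1 ((hx1 n).symm ▸ one_ne_zero))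
  have hsum : ∀ c : ellInfty 𝕜, HasSeriesSum (fun n => (c : ℕ → 𝕜) n • y n)
      (∑' n, (c : ℕ → 𝕜) n • y n) := fun c =>
    (Summable.of_norm_bounded ((summable_geometric_two).mul_left ‖c‖) fun n =>
      (norm_smul_le _ _).trans (mul_le_mul (lp.norm_apply_le_norm ENNReal.top_ne_zero c n) (hy n)
        (norm_nonneg _) (norm_nonneg _))).hasSum.tendsto_sum_nat
  have hkey : ∀ c : ellInfty 𝕜, ∀ u, HasSeriesSum (fun n => (c : ℕ → 𝕜) n • y n) u → u ∈ F →
      c = 0 := fun c u hu huF => by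
    have hq := hu.map F.mkQL
    have hu0 : F.mkQ u = 0 := by simpa using huF
    simp only [mkQL_apply, map_smul, hu0] at hq
    exact lp.ext (hqy.eq_zero_of_hasSeriesSum_zero hqy0 hq)
  refine ⟨⊤, ⟨by simp, fun _ _ => trivial⟩, y, fun c _ hc => hkey c 0 hc F.zero_mem,
    fun c _ => ⟨_, hsum c, ?_⟩⟩
  by_cases h : ∑' n, (c : ℕ → 𝕜) n • y n ∈ F
  · obtain rfl := hkey c _ (hsum c) h
    simp
  · exact Or.inl h

theorem spaceable_compl_of_not_finite_quotient [IsClosed (F : Set E)]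
    (hF : ¬ Module.Finite 𝕜 (E ⧸ F)) : Spaceable 𝕜 (F : Set E)ᶜ := by
  obtain ⟨x, hx1, hx, hqx⟩ := exists_isBasicSeq_isBasicSeq_mkQ F hF
  have hqx0 : ∀ n, F.mkQ (x n) ≠ 0 := fun n => norm_ne_zero_iff.1 ((hx1 n).symm ▸ one_ne_zero)
  let G := (span 𝕜 (Set.range x)).topologicalClosure
  refine ⟨G, (span 𝕜 (Set.range x)).isClosed_topologicalClosure, fun hfin => ?_, fun y hy => ?_⟩
  · have hxG : ∀ n, x n ∈ G := fun n =>
      (span 𝕜 (Set.range x)).le_topologicalClosure (subset_span ⟨n, rfl⟩)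
    exact Module.Finite.not_linearIndependent_of_infinite (fun n => (⟨x n, hxG n⟩ : G))
      (.of_comp G.subtype ((hqx.linearIndependent hqx0).of_comp F.mkQ))
  · by_cases hyF : y ∈ F
    · exact Or.inr (hx.eq_zero_of_mem_closure F.mkQL hqx hqx0 hy (by simpa using hyF))
    · exact Or.inl hyF

end Banach

theorem banach_complement_tfae_general
    {𝕜 : Type*} [RCLike 𝕜] {E : Type*} [NormedAddCommGroup E] [NormedSpace 𝕜 E]
    [CompleteSpace E] (F : Submodule 𝕜 E)
    (hFclosed : IsClosed (F : Set E)) :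
    List.TFAE
      [ ∃ S : Submodule 𝕜 (ellInfty 𝕜), IsClosedSupsetC0 𝕜 S ∧
          ∃ x : ℕ → E, SIndep 𝕜 S x ∧ SeqSLineable 𝕜 x S ((F : Set E)ᶜ),
        Spaceable 𝕜 ((F : Set E)ᶜ),
        ¬ Module.Finite 𝕜 (E ⧸ F) ] := by
  have : IsClosed (F : Set E) := hFclosed
  tfae_have 1 → 3 := fun ⟨_, hS, _, hind, hlin⟩ => not_finite_quotient_of_seqSLineable hS hind hlin
  tfae_have 2 → 3 := not_finite_quotient_of_spaceable_compl
  tfae_have 3 → 1 := exists_seqSLineable_of_not_finite_quotient F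
  tfae_have 3 → 2 := spaceable_compl_of_not_finite_quotient F
  tfae_finish

/-- For a Banach space `E` and an infinite-dimensional closed subspace `F`, the following
are equivalent: (1) `E \ F` is `[(xₙ)ₙ, 𝒮]`-lineable for some closed subspace `𝒮` of `ℓ∞`
containing `c₀` and some `𝒮`-independent sequence `(xₙ)ₙ`; (2) `E \ F` is spaceable;
(3) `F` has infinite codimension in `E`. -/
theorem banach_complement_tfae
    {𝕜 : Type*} [RCLike 𝕜] {E : Type*} [NormedAddCommGroup E] [NormedSpace 𝕜 E]
    [CompleteSpace E] (F : Submodule 𝕜 E)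
    (hFclosed : IsClosed (F : Set E)) (hFdim : ¬ Module.Finite 𝕜 F) :
    List.TFAE
      [ ∃ S : Submodule 𝕜 (ellInfty 𝕜), IsClosedSupsetC0 𝕜 S ∧
          ∃ x : ℕ → E, SIndep 𝕜 S x ∧ SeqSLineable 𝕜 x S ((F : Set E)ᶜ),
        Spaceable 𝕜 ((F : Set E)ᶜ),
        ¬ Module.Finite 𝕜 (E ⧸ F) ] :=
  banach_complement_tfae_general F hFclosed
end

section
/- Let E be an F-space (a complete metrizable topological vector space over 𝕂 = ℝ or ℂ), let Z be a closed linear subspace of E (which is then itself an F-space), let ℐ : Z → E be the identity embedding, and let K : Z → E be a compact continuous linear operator. Then the operator ℐ + K : Z → E has closed range. -/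
/-!
Let `T = ℐ + K` and let `U` be a neighbourhood of `0` in `Z` with `K(U)` inside a compact set.
If `uₙ ∈ U` and `T uₙ` converges, a subsequence of `K uₙ` converges, hence so does a
subsequence of `uₙ = T uₙ - K uₙ`, inside the closed subspace `Z`.

Let `T zₙ → y` and fix a scalar `a` with `‖a‖ > 1`. If infinitely many `T zₙ` lie in one dilate
`aᵏ • T(U)`, rescaling and the observation above give `y ∈ range T`. Otherwise the least `mₙ`
with `T zₙ ∈ a^mₙ • T(U)` tends to infinity. Writing `T zₙ = a^mₙ • T uₙ` with `uₙ ∈ U`, we get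
`T uₙ → 0`, so a subsequence of `uₙ` converges to some `x ∈ ker T`; once `uₙ - x ∈ a⁻¹ • U` this
puts `T zₙ = a^mₙ • T (uₙ - x)` into `a^(mₙ - 1) • T(U)`, contradicting the minimality of `mₙ`.
The exponent `mₙ` stands in for the distance from `zₙ` to `ker T` in the Banach-space proof,
since `T zₙ ∈ a^m • T(U)` iff `zₙ ∈ ker T + a^m • U`; no norm or local convexity is needed.
-/

open Filter Topology Set Pointwise

def SeqProperOn {X Y : Type*} [TopologicalSpace X] [TopologicalSpace Y] (f : X → Y)
    (s : Set X) : Prop :=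
  ∀ ⦃u : ℕ → X⦄, (∀ n, u n ∈ s) → ∀ ⦃y : Y⦄, Tendsto (f ∘ u) atTop (𝓝 y) →
    ∃ x, ∃ φ : ℕ → ℕ, StrictMono φ ∧ Tendsto (u ∘ φ) atTop (𝓝 x)

theorem tendsto_sInf_atTop_of_eventually_notMem {α : Type*} {l : Filter α} {s : α → Set ℕ}
    (hne : ∀ i, (s i).Nonempty) (h : ∀ k, ∀ᶠ i in l, k ∉ s i) :
    Tendsto (fun i => sInf (s i)) l atTop :=
  tendsto_atTop.2 fun M => ((eventually_all_finset (Finset.range M)).2 fun k _ => h k).mono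
    fun i hi => le_csInf (hne i) fun k hk => not_lt.1 fun hkM => hi k (Finset.mem_range.2 hkM) hk

theorem exists_mem_pow_smul_of_mem_nhds_zero {𝕜 X : Type*} [NontriviallyNormedField 𝕜]
    [AddCommGroup X] [Module 𝕜 X] [TopologicalSpace X] [ContinuousSMul 𝕜 X]
    {a : 𝕜} (ha : 1 < ‖a‖) {U : Set X} (hU : U ∈ 𝓝 0) (x : X) : ∃ k : ℕ, x ∈ a ^ k • U := by
  have hpow : Tendsto (a ^ ·) atTop (Bornology.cobounded 𝕜) := by
    simpa [← tendsto_norm_atTop_iff_cobounded] using tendsto_pow_atTop_atTop_of_one_lt ha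
  obtain ⟨k, hk⟩ := (hpow.eventually (absorbent_nhds_zero hU x)).exists
  exact ⟨k, singleton_subset_iff.1 hk⟩

theorem Submodule.seqProperOn_subtype_add {R E : Type*} [Semiring R] [AddCommGroup E]
    [Module R E] [TopologicalSpace E] [IsTopologicalAddGroup E] [FirstCountableTopology E]
    (Z : Submodule R E) (hZ : IsClosed (Z : Set E)) (K : Z →ₗ[R] E) {C : Set E}
    (hC : IsCompact C) : SeqProperOn (Z.subtype + K) (K ⁻¹' C) := by
  intro u hu y hy
  obtain ⟨c, -, φ, hφ, hc⟩ := hC.isSeqCompact hu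
  have hlim : Tendsto (fun k => (u (φ k) : E)) atTop (𝓝 (y - c)) := by
    simpa using (hy.comp hφ.tendsto_atTop).sub hc
  have hmem : y - c ∈ Z := hZ.mem_of_tendsto hlim (.of_forall fun k => (u (φ k)).2)
  exact ⟨⟨y - c, hmem⟩, φ, hφ, tendsto_subtype_rng.2 hlim⟩

namespace SeqProperOn

variable {𝕜 X E : Type*} [NontriviallyNormedField 𝕜] [AddCommGroup X] [Module 𝕜 X]
  [TopologicalSpace X] [AddCommGroup E] [Module 𝕜 E] [TopologicalSpace E] [T2Space E]
  {T : X →ₗ[𝕜] E} {U : Set X}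

theorem mem_range_of_frequently_mem_smul_image [ContinuousConstSMul 𝕜 E]
    (hT : Continuous T) (hU : SeqProperOn T U) {c : 𝕜} (hc : c ≠ 0) {y : ℕ → E} {y₀ : E}
    (hy : Tendsto y atTop (𝓝 y₀)) (hfreq : ∃ᶠ n in atTop, y n ∈ c • T '' U) :
    y₀ ∈ range T := by
  obtain ⟨ψ, hψ, hmem⟩ := extraction_of_frequently_atTop hfreq
  choose u hu hTu using fun k => (mem_smul_set_iff_inv_smul_mem₀ hc _ _).1 (hmem k)
  have hTu_lim : Tendsto (T ∘ u) atTop (𝓝 (c⁻¹ • y₀)) := by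
    simpa only [Function.comp_def, hTu] using (hy.comp hψ.tendsto_atTop).const_smul c⁻¹
  obtain ⟨x, φ, hφ, hx⟩ := hU hu hTu_lim
  have hTx : T x = c⁻¹ • y₀ :=
    tendsto_nhds_unique ((hT.tendsto x).comp hx) (hTu_lim.comp hφ.tendsto_atTop)
  exact ⟨c • x, by rw [map_smul, hTx, smul_inv_smul₀ hc]⟩

theorem exists_mem_pow_pred_smul_image [IsTopologicalAddGroup X] [ContinuousSMul 𝕜 X]
    [ContinuousSMul 𝕜 E] (hT : Continuous T) (hU₀ : U ∈ 𝓝 0) (hU : SeqProperOn T U)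
    {a : 𝕜} (ha : 1 < ‖a‖) {y : ℕ → E} {y₀ : E} (hy : Tendsto y atTop (𝓝 y₀))
    {m : ℕ → ℕ} (hm : Tendsto m atTop atTop) {u : ℕ → X} (hu : ∀ n, u n ∈ U)
    (hyu : ∀ n, a ^ m n • T (u n) = y n) :
    ∃ n, 1 ≤ m n ∧ y n ∈ a ^ (m n - 1) • T '' U := by
  have ha₀ : a ≠ 0 := norm_pos_iff.1 (one_pos.trans ha)
  have hTu_lim : Tendsto (T ∘ u) atTop (𝓝 0) := by
    have hinv : Tendsto (fun n => a⁻¹ ^ m n) atTop (𝓝 0) :=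
      (tendsto_pow_atTop_nhds_zero_of_norm_lt_one
        (by rw [norm_inv]; exact inv_lt_one_of_one_lt₀ ha)).comp hm
    convert hinv.smul hy using 1
    · ext n
      simp [← hyu, inv_pow, smul_smul, ha₀]
    · rw [zero_smul]
  obtain ⟨x, φ, hφ, hx⟩ := hU hu hTu_lim
  have hTx : T x = 0 :=
    tendsto_nhds_unique ((hT.tendsto x).comp hx) (hTu_lim.comp hφ.tendsto_atTop)
  have hclose : ∀ᶠ k in atTop, u (φ k) - x ∈ a⁻¹ • U :=
    (tendsto_sub_nhds_zero_iff.2 hx).eventually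
      ((set_smul_mem_nhds_zero_iff (inv_ne_zero ha₀)).2 hU₀)
  obtain ⟨k, ⟨v, hv, hvu⟩, hmk⟩ :=
    (hclose.and (hφ.tendsto_atTop.eventually (hm.eventually_ge_atTop 1))).exists
  refine ⟨φ k, hmk, T v, mem_image_of_mem T hv, ?_⟩
  have hTv : a⁻¹ • T v = T (u (φ k)) := by
    rw [← map_smul, show a⁻¹ • v = _ from hvu, map_sub, hTx, sub_zero]
  calc a ^ (m (φ k) - 1) • T v = (a ^ (m (φ k) - 1) * a) • a⁻¹ • T v := by
        rw [mul_smul, smul_inv_smul₀ ha₀]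
    _ = y (φ k) := by rw [hTv, pow_sub_one_mul (Nat.one_le_iff_ne_zero.1 hmk), hyu]

theorem frequently_mem_pow_smul_image [IsTopologicalAddGroup X] [ContinuousSMul 𝕜 X]
    [ContinuousSMul 𝕜 E] (hT : Continuous T) (hU₀ : U ∈ 𝓝 0) (hU : SeqProperOn T U)
    {a : 𝕜} (ha : 1 < ‖a‖) {y : ℕ → E} {y₀ : E} (hy : Tendsto y atTop (𝓝 y₀))
    (hrange : ∀ n, y n ∈ range T) : ∃ k : ℕ, ∃ᶠ n in atTop, y n ∈ a ^ k • T '' U := by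
  by_contra! hesc
  have hne : ∀ n, {k : ℕ | y n ∈ a ^ k • T '' U}.Nonempty := fun n => by
    obtain ⟨z, hz⟩ := hrange n
    obtain ⟨k, hk⟩ := exists_mem_pow_smul_of_mem_nhds_zero ha hU₀ z
    exact ⟨k, show y n ∈ a ^ k • T '' U by rw [← hz, ← image_smul_set]; exact mem_image_of_mem T hk⟩
  set m : ℕ → ℕ := fun n => sInf {k : ℕ | y n ∈ a ^ k • T '' U}
  have hm : Tendsto m atTop atTop := tendsto_sInf_atTop_of_eventually_notMem hne hesc
  have hdecomp : ∀ n, ∃ u ∈ U, a ^ m n • T u = y n := fun n => by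
    obtain ⟨_, ⟨u, hu, rfl⟩, hyu⟩ := Nat.sInf_mem (hne n)
    exact ⟨u, hu, hyu⟩
  choose u hu hyu using hdecomp
  obtain ⟨n, hn, hlower⟩ := hU.exists_mem_pow_pred_smul_image hT hU₀ ha hy hm hu hyu
  exact Nat.notMem_of_lt_sInf (Nat.sub_one_lt_of_lt hn) hlower

theorem isClosed_range [IsTopologicalAddGroup X] [ContinuousSMul 𝕜 X] [ContinuousSMul 𝕜 E]
    [SequentialSpace E] (hT : Continuous T) (hU₀ : U ∈ 𝓝 0) (hU : SeqProperOn T U) :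
    IsClosed (range T) := by
  obtain ⟨a, ha⟩ := NormedField.exists_one_lt_norm 𝕜
  refine IsSeqClosed.isClosed fun y y₀ hrange hy => ?_
  obtain ⟨k, hk⟩ := hU.frequently_mem_pow_smul_image hT hU₀ ha hy hrange
  exact hU.mem_range_of_frequently_mem_smul_image hT
    (pow_ne_zero k (norm_pos_iff.1 (one_pos.trans ha))) hy hk

end SeqProperOn

theorem identity_add_compact_closed_range_general
    {𝕜 : Type*} [RCLike 𝕜] {E : Type*} [AddCommGroup E] [Module 𝕜 E]
    [UniformSpace E] [IsUniformAddGroup E] [ContinuousSMul 𝕜 E]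
    [TopologicalSpace.MetrizableSpace E]
    (Z : Submodule 𝕜 E) (hZclosed : IsClosed (Z : Set E))
    (K : Z →ₗ[𝕜] E) (hKcompact : IsCompactOperator K) :
    IsClosed (Set.range fun z : Z => (z : E) + K z) := by
  obtain ⟨C, hC, hKC⟩ := id hKcompact
  exact SeqProperOn.isClosed_range (T := Z.subtype + K)
    (continuous_subtype_val.add hKcompact.continuous) hKC
    (Z.seqProperOn_subtype_add hZclosed K hC)

/-- **Kalton's lemma.** For an `F`-space `E` and a closed subspace `Z` of `E` (itself an
`F`-space), if `K : Z → E` is a compact continuous linear operator and `ℐ : Z → E` is the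
identity embedding, then `ℐ + K` has closed range. -/
theorem identity_add_compact_closed_range
    {𝕜 : Type*} [RCLike 𝕜] {E : Type*} [AddCommGroup E] [Module 𝕜 E]
    [UniformSpace E] [IsUniformAddGroup E] [ContinuousSMul 𝕜 E] [CompleteSpace E]
    [TopologicalSpace.MetrizableSpace E]
    (Z : Submodule 𝕜 E) (hZclosed : IsClosed (Z : Set E))
    (K : Z →ₗ[𝕜] E) (hKcont : Continuous K) (hKcompact : IsCompactOperator K) :
    IsClosed (Set.range fun z : Z => (z : E) + K z) :=
  identity_add_compact_closed_range_general Z hZclosed K hKcompact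
end

section
/- Let E be an F-space (a complete metrizable topological vector space over 𝕂 = ℝ or ℂ), let 𝒮 be a closed linear subspace of ℓ∞, and let (xₙ)ₙ be a sequence in E such that for every (tₙ)ₙ ∈ 𝒮 the series Σₙ tₙ xₙ converges in E. Then the linear operator 𝒪 : 𝒮 → E defined by 𝒪((tₙ)ₙ) = Σₙ tₙ xₙ is continuous. -/
/-!
The partial-sum operators `T_N t = ∑_{n<N} tₙ xₙ` are continuous on the Banach space `𝒮`
and converge pointwise. A Baire-category form of Banach–Steinhaus, valid for an arbitrary
topological vector space as target, makes them equicontinuous: for a closed neighbourhood `C`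
of `0` the closed set `⋂_N T_N⁻¹ C` is absorbent, hence has an interior point, so its
difference set is a neighbourhood of `0` mapped into `C - C` by every `T_N`. The pointwise
limit of an equicontinuous family is continuous.
-/

open Filter Topology

open Set Bornology Pointwise

theorem Absorbent.nonempty_interior_of_isClosed {𝕜 G : Type*} [NontriviallyNormedField 𝕜]
    [AddCommGroup G] [Module 𝕜 G] [TopologicalSpace G] [ContinuousConstSMul 𝕜 G] [BaireSpace G]
    {B : Set G} (hB : Absorbent 𝕜 B) (hBc : IsClosed B) : (interior B).Nonempty := by
  obtain ⟨c, hc⟩ := NormedField.exists_one_lt_norm 𝕜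
  have hc₀ : ∀ n : ℕ, c ^ n ≠ 0 := fun n ↦ pow_ne_zero n (norm_pos_iff.mp (one_pos.trans hc))
  have hcover : ⋃ n : ℕ, c ^ n • B = univ := by
    refine eq_univ_of_forall fun x ↦ ?_
    obtain ⟨r, -, hr⟩ := (hB x).exists_pos
    obtain ⟨n, hn⟩ := pow_unbounded_of_one_lt r hc
    exact mem_iUnion.mpr ⟨n, hr (c ^ n) (by rw [norm_pow]; exact hn.le) rfl⟩
  obtain ⟨n, hn⟩ := nonempty_interior_of_iUnion_of_closed
    (fun n ↦ hBc.smul_of_ne_zero (hc₀ n)) hcover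
  rw [interior_smul₀ (hc₀ n)] at hn
  exact smul_set_nonempty.mp hn

theorem BaireSpace.banach_steinhaus {ι 𝕜 G F : Type*} [NontriviallyNormedField 𝕜]
    [AddCommGroup G] [Module 𝕜 G] [TopologicalSpace G] [IsTopologicalAddGroup G]
    [ContinuousConstSMul 𝕜 G] [BaireSpace G]
    [AddCommGroup F] [Module 𝕜 F] [UniformSpace F] [IsUniformAddGroup F]
    {𝓕 : ι → G →L[𝕜] F} (H : ∀ x, IsVonNBounded 𝕜 (range fun i ↦ 𝓕 i x)) :
    Equicontinuous ((↑) ∘ 𝓕) := by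
  refine equicontinuous_of_equicontinuousAt_zero _ fun U hU ↦ ?_
  rw [uniformity_eq_comap_nhds_zero] at hU
  obtain ⟨W, hW, hWU⟩ := mem_comap.mp hU
  obtain ⟨V, hV, hVW⟩ := exists_nhds_half_neg hW
  obtain ⟨C, ⟨hC, hCc⟩, hCV⟩ := (closed_nhds_basis (0 : F)).mem_iff.mp hV
  set B := ⋂ i, 𝓕 i ⁻¹' C
  have hBc : IsClosed B := isClosed_iInter fun i ↦ hCc.preimage (𝓕 i).continuous
  have hBabs : Absorbent 𝕜 B := fun x ↦ by
    refine absorbs_iff_eventually_cobounded_mapsTo.mpr ?_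
    filter_upwards [absorbs_iff_eventually_cobounded_mapsTo.mp (H x hC)] with c hc
    simpa [B, MapsTo] using hc
  obtain ⟨x₀, hx₀⟩ := hBabs.nonempty_interior_of_isClosed hBc
  have hnear : ∀ᶠ v in 𝓝 (0 : G), x₀ + v ∈ B :=
    ((continuous_const_add x₀).tendsto' 0 x₀ (add_zero x₀)).eventually_mem
      (mem_interior_iff_mem_nhds.mp hx₀)
  filter_upwards [hnear] with v hv i
  refine hWU ?_
  have hB : ∀ y ∈ B, 𝓕 i y ∈ C := fun y hy ↦ mem_iInter.mp hy i
  simpa using hVW _ (hCV (hB _ hv)) _ (hCV (hB _ (interior_subset hx₀)))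

def BaireSpace.continuousLinearMapOfTendsto {𝕜 G F : Type*} [NontriviallyNormedField 𝕜]
    [AddCommGroup G] [Module 𝕜 G] [TopologicalSpace G] [IsTopologicalAddGroup G]
    [ContinuousConstSMul 𝕜 G] [BaireSpace G]
    [AddCommGroup F] [Module 𝕜 F] [UniformSpace F] [IsUniformAddGroup F] [ContinuousSMul 𝕜 F]
    [T2Space F] (g : ℕ → G →L[𝕜] F) {f : G → F} (h : Tendsto (fun n x ↦ g n x) atTop (𝓝 f)) :
    G →L[𝕜] F where
  toLinearMap := linearMapOfTendsto _ _ h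
  cont := h.continuous_of_equicontinuous <| BaireSpace.banach_steinhaus fun x ↦
    (tendsto_pi_nhds.mp h x).isVonNBounded_range 𝕜

namespace ellInfty

variable {𝕜 E : Type*} [RCLike 𝕜] [AddCommGroup E] [Module 𝕜 E] [TopologicalSpace E]
  [ContinuousAdd E] [ContinuousSMul 𝕜 E]

variable (𝕜) in
noncomputable def partialSumCLM (x : ℕ → E) (N : ℕ) : ellInfty 𝕜 →L[𝕜] E :=
  ∑ n ∈ Finset.range N, (lp.evalCLM 𝕜 (fun _ ↦ 𝕜) ⊤ n).smulRight (x n)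

theorem partialSumCLM_apply (x : ℕ → E) (N : ℕ) (t : ellInfty 𝕜) :
    partialSumCLM 𝕜 x N t = ∑ n ∈ Finset.range N, (t : ℕ → 𝕜) n • x n := by
  simp only [partialSumCLM, sum_apply, ContinuousLinearMap.smulRight_apply]
  rfl

end ellInfty

theorem summation_operator_continuous_general
    {𝕜 : Type*} [RCLike 𝕜] {E : Type*} [AddCommGroup E] [Module 𝕜 E]
    [UniformSpace E] [IsUniformAddGroup E] [ContinuousSMul 𝕜 E]
    [TopologicalSpace.MetrizableSpace E]
    (S : Submodule 𝕜 (ellInfty 𝕜)) (hSclosed : IsClosed (S : Set (ellInfty 𝕜)))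
    (x : ℕ → E)
    (hconv : ∀ t : ellInfty 𝕜, t ∈ S →
      ∃ s : E, HasSeriesSum (fun n => (t : ∀ _ : ℕ, 𝕜) n • x n) s) :
    ∃ O : S →ₗ[𝕜] E, Continuous O ∧
      ∀ t : S, HasSeriesSum (fun n => ((t : ellInfty 𝕜) : ∀ _ : ℕ, 𝕜) n • x n) (O t) := by
  choose s hs using fun t : S ↦ hconv t t.2
  let T (N : ℕ) : S →L[𝕜] E := (ellInfty.partialSumCLM 𝕜 x N).comp S.subtypeL
  have hT : Tendsto (fun N t ↦ T N t) atTop (𝓝 s) := tendsto_pi_nhds.mpr fun t ↦ by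
    simp only [T, ContinuousLinearMap.comp_apply, ellInfty.partialSumCLM_apply]
    exact hs t
  have : CompleteSpace S := hSclosed.completeSpace_coe
  -- given by hand: instance search for `BaireSpace S` gets lost in the locally compact route
  have : TopologicalSpace.IsCompletelyPseudoMetrizableSpace S := .of_completeSpace_pseudometrizable
  have : BaireSpace S := .of_completelyPseudoMetrizable
  let O : S →L[𝕜] E := BaireSpace.continuousLinearMapOfTendsto T hT
  exact ⟨O, O.continuous, hs⟩

/-- For an `F`-space `E`, a closed subspace `𝒮` of `ℓ∞`, and a sequence `(xₙ)ₙ` in `E` such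
that `∑ₙ tₙ xₙ` converges for every `(tₙ)ₙ ∈ 𝒮`, the linear operator
`𝒪 : 𝒮 → E`, `𝒪((tₙ)ₙ) = ∑ₙ tₙ xₙ`, is continuous. -/
theorem summation_operator_continuous
    {𝕜 : Type*} [RCLike 𝕜] {E : Type*} [AddCommGroup E] [Module 𝕜 E]
    [UniformSpace E] [IsUniformAddGroup E] [ContinuousSMul 𝕜 E] [CompleteSpace E]
    [TopologicalSpace.MetrizableSpace E]
    (S : Submodule 𝕜 (ellInfty 𝕜)) (hSclosed : IsClosed (S : Set (ellInfty 𝕜)))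
    (x : ℕ → E)
    (hconv : ∀ t : ellInfty 𝕜, t ∈ S →
      ∃ s : E, HasSeriesSum (fun n => (t : ∀ _ : ℕ, 𝕜) n • x n) s) :
    ∃ O : S →ₗ[𝕜] E, Continuous O ∧
      ∀ t : S, HasSeriesSum (fun n => ((t : ellInfty 𝕜) : ∀ _ : ℕ, 𝕜) n • x n) (O t) :=
  summation_operator_continuous_general S hSclosed x hconv
end
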